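/- Let P ⊆ ℝⁿ be a simple polygon with finitely many vertices and let p ∈ (0, 3). Then the integral Menger curvature of P is finite: M_p(P) < ∞. -/

import Mathlib

/-!
Since `κ(x, y, z) ≤ 2 / max (|x - z|, |y - z|)`, what matters is how far apart the points are
compared with their distance to the nearest vertex. Let `v` be a vertex where the sides `[v, w₁]`
and `[v, w₂]` meet. If `x, y, z` lie on one side, `κ = 0`; otherwise two of them lie on different
sides, and as these meet at a nonzero angle, their distance is at least `c` times their distances
to `v` (law of cosines). Hence `κ ≲ 1 / max (|x - v|, |y - v|, |z - v|)`, so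
`κ ^ p ≲ |x - v| ^ (-p/3) |y - v| ^ (-p/3) |z - v| ^ (-p/3)`, a product of functions of one
variable each, integrable along the polygon because `p / 3 < 1`. On three sides with no common
point `κ` is bounded by compactness, and by simplicity any other three sides are among two
consecutive ones.
-/

open MeasureTheory Real
open scoped ENNReal NNReal Classical

/-- The Menger curvature of three points in `ℝⁿ`: the reciprocal of the circumradius,
`κ(x,y,z) = 2 dist(z, L_{x,y}) / (|x-z| |y-z|)` for pairwise distinct non-collinear points,
and `0` otherwise. -/
noncomputable def menger {n : ℕ} (x y z : EuclideanSpace ℝ (Fin n)) : ℝ :=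
  if x ≠ y ∧ y ≠ z ∧ x ≠ z ∧ ¬ Collinear ℝ ({x, y, z} : Set (EuclideanSpace ℝ (Fin n)))
  then 2 * Metric.infDist z (affineSpan ℝ ({x, y} : Set (EuclideanSpace ℝ (Fin n))) :
      Set (EuclideanSpace ℝ (Fin n))) / (dist x z * dist y z)
  else 0

/-- The point `(a, b) ∈ ℝ²` (with the Euclidean metric). -/
noncomputable def pt (a b : ℝ) : EuclideanSpace ℝ (Fin 2) :=
  (WithLp.equiv 2 (Fin 2 → ℝ)).symm ![a, b]

/-- Integral Menger curvature `M_p(X)` (innermost integration in `x`). -/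
noncomputable def Mp {n : ℕ} (p : ℝ) (X : Set (EuclideanSpace ℝ (Fin n))) : ℝ≥0∞ :=
  ∫⁻ z in X, ∫⁻ y in X, ∫⁻ x in X,
    (ENNReal.ofReal (menger x y z)) ^ p ∂μH[1] ∂μH[1] ∂μH[1]

/-- Intermediate energy `I_p(X)`. -/
noncomputable def Ip {n : ℕ} (p : ℝ) (X : Set (EuclideanSpace ℝ (Fin n))) : ℝ≥0∞ :=
  ∫⁻ y in X, ∫⁻ x in X,
    (⨆ z ∈ X, ENNReal.ofReal (menger x y z)) ^ p ∂μH[1] ∂μH[1]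

/-- Global curvature energy `U_p(X)`. -/
noncomputable def Up {n : ℕ} (p : ℝ) (X : Set (EuclideanSpace ℝ (Fin n))) : ℝ≥0∞ :=
  ∫⁻ x in X, (⨆ y ∈ X, ⨆ z ∈ X, ENNReal.ofReal (menger x y z)) ^ p ∂μH[1]

/-- `P ⊆ ℝⁿ` is a simple polygon with finitely many vertices: there are `N ≥ 3` vertices
`v 0, …, v (N-1)` (consecutive ones distinct) such that `P` is the union of the closed
segments `S i = [v i, v (i+1)]`, `i = 0, …, N-2`, consecutive segments meet exactly in their
common vertex, and non-adjacent segments are disjoint. -/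
def IsSimplePolygon {n : ℕ} (P : Set (EuclideanSpace ℝ (Fin n))) : Prop :=
  ∃ (N : ℕ) (v : ℕ → EuclideanSpace ℝ (Fin n)),
    3 ≤ N ∧
    (∀ i, i + 1 < N → v i ≠ v (i + 1)) ∧
    P = ⋃ i ∈ Finset.range (N - 1), segment ℝ (v i) (v (i + 1)) ∧
    (∀ i, i + 2 < N →
      segment ℝ (v i) (v (i + 1)) ∩ segment ℝ (v (i + 1)) (v (i + 2)) = {v (i + 1)}) ∧
    (∀ i j, i + 2 ≤ j → j + 1 < N →
      segment ℝ (v i) (v (i + 1)) ∩ segment ℝ (v j) (v (j + 1)) = ∅)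

open Set Metric Filter

lemma collinear_of_subset_segment {V : Type*} [AddCommGroup V] [Module ℝ V] {q r x y z : V}
    (h : ({x, y, z} : Set V) ⊆ segment ℝ q r) : Collinear ℝ {x, y, z} := by
  have hline : ∀ w ∈ segment ℝ q r, w ∈ line[ℝ, q, r] := fun w hw =>
    (mem_segment_iff_wbtw.1 hw).mem_affineSpan
  exact collinear_triple_of_mem_affineSpan_pair (hline x (h (by simp)))
    (hline y (h (by simp))) (hline z (h (by simp)))

lemma isCompact_segment {E : Type*} [AddCommGroup E] [Module ℝ E] [TopologicalSpace E]
    [IsTopologicalAddGroup E] [ContinuousSMul ℝ E] (x y : E) : IsCompact (segment ℝ x y) := by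
  rw [segment_eq_image]
  exact isCompact_Icc.image (by fun_prop)

def polygonalPath {E : Type*} [AddCommGroup E] [Module ℝ E] (v : ℕ → E) (m : ℕ) : Set E :=
  ⋃ i ∈ Finset.range m, segment ℝ (v i) (v (i + 1))

lemma isCompact_polygonalPath {E : Type*} [AddCommGroup E] [Module ℝ E] [TopologicalSpace E]
    [IsTopologicalAddGroup E] [ContinuousSMul ℝ E] (v : ℕ → E) (m : ℕ) :
    IsCompact (polygonalPath v m) :=
  (Finset.range m).isCompact_biUnion fun _ _ => isCompact_segment _ _

lemma dist_le_two_mul_max_dist {X : Type*} [PseudoMetricSpace X] {x y z r s : X}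
    (hr : r ∈ ({x, y, z} : Set X)) (hs : s ∈ ({x, y, z} : Set X)) :
    dist r s ≤ 2 * max (dist x z) (dist y z) := by
  have hz : ∀ w ∈ ({x, y, z} : Set X),
      dist w z ≤ max (dist x z) (dist y z) := by
    rintro w (rfl | rfl | rfl)
    · exact le_max_left _ _
    · exact le_max_right _ _
    · exact (dist_self w).trans_le (le_max_of_le_left dist_nonneg)
  linarith [dist_triangle_right r s z, hz r hr, hz s hs]

section InnerProductSpace

variable {E : Type*} [NormedAddCommGroup E] [InnerProductSpace ℝ E]

lemma one_sub_mul_norm_le_norm_sub {x y : E} {γ : ℝ} (hγ : 0 ≤ γ) (hγ1 : γ ≤ 1)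
    (h : inner ℝ x y ≤ γ * (‖x‖ * ‖y‖)) : (1 - γ) * ‖y‖ ≤ ‖x - y‖ := by
  refine (pow_le_pow_iff_left₀ (by nlinarith [norm_nonneg y]) (norm_nonneg _)
    two_ne_zero).1 ?_
  rw [norm_sub_sq_real]
  nlinarith [sq_nonneg (‖x‖ - γ * ‖y‖), mul_nonneg (mul_nonneg hγ (sub_nonneg.2 hγ1))
    (sq_nonneg ‖y‖)]

lemma one_sub_mul_max_norm_le_norm_sub {x y : E} {γ : ℝ} (hγ : 0 ≤ γ) (hγ1 : γ ≤ 1)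
    (h : inner ℝ x y ≤ γ * (‖x‖ * ‖y‖)) : (1 - γ) * max ‖x‖ ‖y‖ ≤ ‖x - y‖ := by
  have h' : inner ℝ y x ≤ γ * (‖y‖ * ‖x‖) := by rwa [real_inner_comm, mul_comm ‖y‖]
  rw [mul_max_of_nonneg _ _ (sub_nonneg.2 hγ1)]
  exact max_le (norm_sub_rev y x ▸ one_sub_mul_norm_le_norm_sub hγ hγ1 h')
    (one_sub_mul_norm_le_norm_sub hγ hγ1 h)

lemma mem_segment_of_smul_sub_eq_smul_sub {v w₁ w₂ : E} {r₁ r₂ : ℝ} (hr₁ : 0 < r₁)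
    (hr₂ : 0 ≤ r₂) (hr : r₂ ≤ r₁) (h : r₁ • (w₁ - v) = r₂ • (w₂ - v)) :
    w₁ ∈ segment ℝ v w₂ := by
  rw [segment_eq_image']
  refine ⟨r₂ / r₁, ⟨div_nonneg hr₂ hr₁.le, (div_le_one hr₁).2 hr⟩, ?_⟩
  show v + (r₂ / r₁) • (w₂ - v) = w₁
  rw [div_eq_inv_mul, mul_smul, ← h, inv_smul_smul₀ hr₁.ne', add_sub_cancel]

lemma inner_sub_lt_norm_mul_norm_of_segment_inter_eq {v w₁ w₂ : E} (hw₁ : w₁ ≠ v)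
    (hw₂ : w₂ ≠ v)     (h : segment ℝ v w₁ ∩ segment ℝ v w₂ = {v}) :
    inner ℝ (w₁ - v) (w₂ - v) < ‖w₁ - v‖ * ‖w₂ - v‖ := by
  refine (real_inner_le_norm _ _).lt_of_ne fun heq => ?_
  have ha : 0 < ‖w₁ - v‖ := norm_pos_iff.2 (sub_ne_zero.2 hw₁)
  have hb : 0 < ‖w₂ - v‖ := norm_pos_iff.2 (sub_ne_zero.2 hw₂)
  have hsmul := inner_eq_norm_mul_iff_real.1 heq
  rcases le_total ‖w₁ - v‖ ‖w₂ - v‖ with hab | hab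
  · have hmem := mem_segment_of_smul_sub_eq_smul_sub hb ha.le hab hsmul
    exact hw₁ (h.subset ⟨right_mem_segment ℝ v w₁, hmem⟩)
  · have hmem := mem_segment_of_smul_sub_eq_smul_sub ha hb.le hab hsmul.symm
    exact hw₂ (h.subset ⟨hmem, right_mem_segment ℝ v w₂⟩)

lemma exists_mul_max_dist_le_dist_of_segment_inter_eq {v w₁ w₂ : E} (hw₁ : w₁ ≠ v)
    (hw₂ : w₂ ≠ v) (h : segment ℝ v w₁ ∩ segment ℝ v w₂ = {v}) :
    ∃ c > 0, ∀ x ∈ segment ℝ v w₁, ∀ z ∈ segment ℝ v w₂,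
      c * max (dist x v) (dist z v) ≤ dist x z := by
  set a := w₁ - v
  set b := w₂ - v
  have hab : 0 < ‖a‖ * ‖b‖ :=
    mul_pos (norm_pos_iff.2 (sub_ne_zero.2 hw₁)) (norm_pos_iff.2 (sub_ne_zero.2 hw₂))
  set γ := max 0 (inner ℝ a b / (‖a‖ * ‖b‖))
  have hγ1 : γ < 1 :=
    max_lt one_pos ((div_lt_one hab).2 (inner_sub_lt_norm_mul_norm_of_segment_inter_eq hw₁ hw₂ h))
  have hinner : inner ℝ a b ≤ γ * (‖a‖ * ‖b‖) := by
    rw [← div_le_iff₀ hab]; exact le_max_right _ _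
  refine ⟨1 - γ, sub_pos.2 hγ1, fun x hx z hz => ?_⟩
  obtain ⟨s, ⟨hs, -⟩, rfl⟩ := (segment_eq_image' ℝ v w₁).subset hx
  obtain ⟨u, ⟨hu, -⟩, rfl⟩ := (segment_eq_image' ℝ v w₂).subset hz
  have hsu : inner ℝ (s • a) (u • b) ≤ γ * (‖s • a‖ * ‖u • b‖) := by
    rw [real_inner_smul_left, real_inner_smul_right, norm_smul, norm_smul,
      Real.norm_of_nonneg hs, Real.norm_of_nonneg hu]
    nlinarith [mul_le_mul_of_nonneg_left hinner (mul_nonneg hs hu)]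
  simpa only [dist_eq_norm, add_sub_cancel_left, add_sub_add_left_eq_sub] using
    one_sub_mul_max_norm_le_norm_sub (le_max_left _ _) hγ1.le hsu

end InnerProductSpace

lemma ENNReal.rpow_le_rpow_of_nonpos {x y : ℝ≥0∞} {z : ℝ} (hxy : x ≤ y) (hz : z ≤ 0) :
    y ^ z ≤ x ^ z := by
  have h := ENNReal.inv_le_inv.2 (ENNReal.rpow_le_rpow hxy (neg_nonneg.2 hz))
  rwa [← ENNReal.rpow_neg, ← ENNReal.rpow_neg, neg_neg] at h

lemma ENNReal.ofReal_rpow_le_of_mul_max_le {κ K a b c p : ℝ} (hK : 0 < K) (hp : 0 < p)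
    (h : κ * max a (max b c) ≤ K) :
    ENNReal.ofReal κ ^ p ≤ ENNReal.ofReal K ^ p * (ENNReal.ofReal a ^ (-(p / 3)) *
      ENNReal.ofReal b ^ (-(p / 3)) * ENNReal.ofReal c ^ (-(p / 3))) := by
  set M := max a (max b c)
  have hκ : ENNReal.ofReal κ ≤ ENNReal.ofReal K / ENNReal.ofReal M := by
    rcases le_or_gt M 0 with hM | hM
    · rw [ENNReal.ofReal_of_nonpos hM, ENNReal.div_zero (ENNReal.ofReal_pos.2 hK).ne']
      exact le_top
    · rw [← ENNReal.ofReal_div_of_pos hM]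
      exact ENNReal.ofReal_le_ofReal ((le_div_iff₀ hM).2 h)
  have hcube : ENNReal.ofReal M ^ (-p) = ENNReal.ofReal M ^ (-(p / 3)) *
      ENNReal.ofReal M ^ (-(p / 3)) * ENNReal.ofReal M ^ (-(p / 3)) := by
    rw [← pow_three', ← ENNReal.rpow_natCast, ← ENNReal.rpow_mul]
    norm_num
  have hanti : ∀ d ≤ M, ENNReal.ofReal M ^ (-(p / 3)) ≤ ENNReal.ofReal d ^ (-(p / 3)) :=
    fun d hd => ENNReal.rpow_le_rpow_of_nonpos (ENNReal.ofReal_le_ofReal hd) (by linarith)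
  calc ENNReal.ofReal κ ^ p ≤ (ENNReal.ofReal K / ENNReal.ofReal M) ^ p :=
        ENNReal.rpow_le_rpow hκ hp.le
    _ = ENNReal.ofReal K ^ p * ENNReal.ofReal M ^ (-p) := by
        rw [div_eq_mul_inv, ENNReal.mul_rpow_of_nonneg _ _ hp.le, ENNReal.inv_rpow,
          ← ENNReal.rpow_neg]
    _ ≤ _ := by
        rw [hcube]
        refine mul_le_mul' le_rfl (mul_le_mul' (mul_le_mul' ?_ ?_) ?_)
        · exact hanti a (le_max_left _ _)
        · exact hanti b ((le_max_left _ _).trans (le_max_right _ _))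
        · exact hanti c ((le_max_right _ _).trans (le_max_right _ _))

section Lintegral

variable {α ι : Type*} [MeasurableSpace α] {μ : Measure α} {s : Finset ι}
  {g : ι → α → ℝ≥0∞}

lemma lintegral_const_add_sum_mul (hg : ∀ i, Measurable (g i)) (C : ℝ≥0∞) (a : ι → ℝ≥0∞) :
    ∫⁻ x, C + ∑ i ∈ s, a i * g i x ∂μ = C * μ univ + ∑ i ∈ s, a i * ∫⁻ x, g i x ∂μ := by
  rw [lintegral_add_left measurable_const, lintegral_const,
    lintegral_finsetSum _ fun i _ => (hg i).const_mul (a i)]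
  exact congrArg (C * μ univ + ·) (Finset.sum_congr rfl fun i _ => lintegral_const_mul (a i) (hg i))

lemma lintegral_lintegral_lintegral_const_add_sum_lt_top [IsFiniteMeasure μ] {C : ℝ≥0∞}
    (hC : C ≠ ⊤) {K : ι → ℝ≥0∞} (hK : ∀ i, K i ≠ ⊤) (hg : ∀ i, Measurable (g i))
    (hgμ : ∀ i, ∫⁻ x, g i x ∂μ ≠ ⊤) :
    ∫⁻ z, ∫⁻ y, ∫⁻ x, C + ∑ i ∈ s, K i * (g i x * g i y * g i z) ∂μ ∂μ ∂μ < ⊤ := by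
  set I := fun i => ∫⁻ x, g i x ∂μ
  have hx : ∀ y z, ∫⁻ x, C + ∑ i ∈ s, K i * (g i x * g i y * g i z) ∂μ =
      C * μ univ + ∑ i ∈ s, K i * I i * g i z * g i y := fun y z => by
    calc _ = ∫⁻ x, C + ∑ i ∈ s, K i * g i y * g i z * g i x ∂μ := by
          refine lintegral_congr fun x => congrArg (C + ·) (Finset.sum_congr rfl fun i _ => ?_)
          ring
      _ = _ := by
          rw [lintegral_const_add_sum_mul hg]
          exact congrArg (C * μ univ + ·) (Finset.sum_congr rfl fun i _ => by ring)
  have hy : ∀ z, ∫⁻ y, C * μ univ + ∑ i ∈ s, K i * I i * g i z * g i y ∂μ =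
      C * μ univ * μ univ + ∑ i ∈ s, K i * I i * I i * g i z := fun z => by
    rw [lintegral_const_add_sum_mul hg]
    exact congrArg (C * μ univ * μ univ + ·) (Finset.sum_congr rfl fun i _ => by ring)
  simp_rw [hx, hy, lintegral_const_add_sum_mul hg]
  refine ENNReal.add_lt_top.2 ⟨by finiteness, ENNReal.sum_lt_top.2 fun i _ => ?_⟩
  have := hK i
  have := hgμ i
  finiteness

end Lintegral

lemma lintegral_biUnion_finset_le {α β : Type*} [MeasurableSpace α] {μ : Measure α}
    (s : Finset β) (t : β → Set α) (f : α → ℝ≥0∞) :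
    ∫⁻ a in ⋃ b ∈ s, t b, f a ∂μ ≤ ∑ b ∈ s, ∫⁻ a in t b, f a ∂μ := by
  calc ∫⁻ a in ⋃ b ∈ s, t b, f a ∂μ
      ≤ ∫⁻ a, f a ∂(Measure.sum fun b : (s : Set β) => μ.restrict (t b)) :=
        lintegral_mono' (Measure.restrict_biUnion_le s.countable_toSet) le_rfl
    _ = ∑ b ∈ s, ∫⁻ a in t b, f a ∂μ := by
        rw [lintegral_sum_measure]
        exact Finset.tsum_subtype s fun b => ∫⁻ a in t b, f a ∂μ

lemma Isometry.setLIntegral_image_hausdorffMeasure {X Y : Type*} [EMetricSpace X]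
    [CompleteSpace X] [MeasurableSpace X] [BorelSpace X] [EMetricSpace Y] [MeasurableSpace Y]
    [BorelSpace Y]
    {ψ : X → Y} (hψ : Isometry ψ) {d : ℝ} (hd : 0 ≤ d) (s : Set X) (f : Y → ℝ≥0∞) :
    ∫⁻ y in ψ '' s, f y ∂μH[d] = ∫⁻ x in s, f (ψ x) ∂μH[d] := by
  have hemb : MeasurableEmbedding ψ := hψ.isClosedEmbedding.measurableEmbedding
  have hrestrict : (μH[d] : Measure Y).restrict (ψ '' s) = (μH[d].restrict s).map ψ := by
    ext t ht
    rw [Measure.restrict_apply ht, hemb.map_apply, Measure.restrict_apply (hemb.measurable ht),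
      ← image_preimage_inter, hψ.hausdorffMeasure_image (Or.inl hd)]
  rw [hrestrict, hemb.lintegral_map]

lemma setLIntegral_ball_ofReal_abs_rpow_neg_lt_top {e : ℝ} (he : e < 1) (R : ℝ) :
    ∫⁻ t in ball (0 : ℝ) R, ENNReal.ofReal |t| ^ (-e) < ⊤ := by
  have hint : IntegrableOn (fun t : ℝ => |t| ^ (-e)) (ball 0 R) :=
    integrableOn_ball_of_norm_le_rpow (C := 1) (by simp) (by simpa using he)
      (ae_of_all _ fun t => by simp [abs_of_nonneg (Real.rpow_nonneg (abs_nonneg t) _)])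
      (continuous_abs.measurable.pow_const (-e)).aestronglyMeasurable
  refine (lintegral_congr_ae ?_).trans_lt hint.lintegral_lt_top
  filter_upwards [ae_restrict_of_ae (compl_mem_ae_iff.2 (measure_singleton (0 : ℝ)))] with t ht
  exact ENNReal.ofReal_rpow_of_pos (abs_pos.2 ht)

section Segment

variable {E : Type*} [NormedAddCommGroup E] [InnerProductSpace ℝ E] [MeasurableSpace E]
  [BorelSpace E]

lemma setLIntegral_segment_edist_rpow_neg_lt_top {e : ℝ} (he0 : 0 ≤ e) (he : e < 1)
    (q r u : E) : ∫⁻ w in segment ℝ q r, edist w u ^ (-e) ∂μH[1] < ⊤ := by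
  rcases eq_or_ne q r with rfl | hqr
  · rw [setLIntegral_measure_zero _ _ ((hausdorffMeasure_segment q q).trans (edist_self q))]
    exact ENNReal.zero_lt_top
  set L := ‖r - q‖
  have hL : 0 < L := norm_pos_iff.2 (sub_ne_zero.2 hqr.symm)
  set d := L⁻¹ • (r - q)
  have hd : ‖d‖ = 1 := by
    rw [norm_smul, Real.norm_eq_abs, abs_of_pos (inv_pos.2 hL), inv_mul_cancel₀ hL.ne']
  set t₀ := inner ℝ (u - q) d
  -- the line through `q` and `r`, parametrized by arclength from the foot of `u`
  set ψ : ℝ → E := fun t => q + (t + t₀) • d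
  have hψ : Isometry ψ := Isometry.of_dist_eq fun t s => by
    simp only [ψ, dist_eq_norm, add_sub_add_left_eq_sub, ← sub_smul, norm_smul, hd, mul_one]
    ring_nf
  have hsub : segment ℝ q r ⊆ ψ '' ball 0 (L + |t₀| + 1) := by
    intro w hw
    obtain ⟨θ, ⟨hθ0, hθ1⟩, rfl⟩ := (segment_eq_image' ℝ q r).subset hw
    refine ⟨θ * L - t₀, ?_, ?_⟩
    · rw [mem_ball_zero_iff, Real.norm_eq_abs]
      have := abs_sub (θ * L) t₀
      rw [abs_of_nonneg (mul_nonneg hθ0 hL.le)] at this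
      nlinarith
    · simp only [ψ, d, sub_add_cancel, smul_smul, mul_assoc, mul_inv_cancel₀ hL.ne', mul_one]
  have hfoot : ∀ t, ENNReal.ofReal |t| ≤ edist (ψ t) u := fun t => by
    have hinner : inner ℝ (ψ t - u) d = t := by
      have : ψ t - u = (t + t₀) • d - (u - q) := by simp only [ψ]; abel
      rw [this, inner_sub_left, real_inner_smul_left, real_inner_self_eq_norm_sq, hd]
      ring
    rw [edist_dist, dist_eq_norm]
    refine ENNReal.ofReal_le_ofReal ?_
    calc |t| = |inner ℝ (ψ t - u) d| := by rw [hinner]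
      _ ≤ ‖ψ t - u‖ * ‖d‖ := abs_real_inner_le_norm _ _
      _ = ‖ψ t - u‖ := by rw [hd, mul_one]
  calc ∫⁻ w in segment ℝ q r, edist w u ^ (-e) ∂μH[1]
      ≤ ∫⁻ w in ψ '' ball 0 (L + |t₀| + 1), edist w u ^ (-e) ∂μH[1] := lintegral_mono_set hsub
    _ = ∫⁻ t in ball 0 (L + |t₀| + 1), edist (ψ t) u ^ (-e) := by
        rw [hψ.setLIntegral_image_hausdorffMeasure zero_le_one, hausdorffMeasure_real]
    _ ≤ ∫⁻ t in ball 0 (L + |t₀| + 1), ENNReal.ofReal |t| ^ (-e) :=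
        lintegral_mono fun t => ENNReal.rpow_le_rpow_of_nonpos (hfoot t) (neg_nonpos.2 he0)
    _ < ⊤ := setLIntegral_ball_ofReal_abs_rpow_neg_lt_top he _

lemma hausdorffMeasure_polygonalPath_lt_top (v : ℕ → E) (m : ℕ) :
    μH[1] (polygonalPath v m) < ⊤ :=
  (measure_biUnion_finset_le _ _).trans_lt <| ENNReal.sum_lt_top.2 fun _ _ =>
    (hausdorffMeasure_segment _ _).trans_lt (edist_lt_top _ _)

lemma setLIntegral_polygonalPath_edist_rpow_neg_lt_top {e : ℝ} (he0 : 0 ≤ e) (he : e < 1)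
    (v : ℕ → E) (m : ℕ) (u : E) :
    ∫⁻ w in polygonalPath v m, edist w u ^ (-e) ∂μH[1] < ⊤ :=
  (lintegral_biUnion_finset_le _ _ _).trans_lt <| ENNReal.sum_lt_top.2 fun _ _ =>
    setLIntegral_segment_edist_rpow_neg_lt_top he0 he _ _ u

end Segment

lemma exists_subset_union_succ_of_inter_nonempty {α : Type*} {S : ℕ → Set α} {N : ℕ}
    (hN : 3 ≤ N) (hS : ∀ i j, i + 2 ≤ j → j + 1 < N → S i ∩ S j = ∅) {a b c : ℕ}
    (ha : a < N - 1) (hb : b < N - 1) (hc : c < N - 1) (h : (S a ∩ S b ∩ S c).Nonempty) :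
    ∃ i, i + 2 < N ∧ S a ∪ S b ∪ S c ⊆ S i ∪ S (i + 1) := by
  have hnear : ∀ j k, j < N - 1 → k < N - 1 → (S j ∩ S k).Nonempty → j ≤ k + 1 := by
    intro j k hj hk hjk
    by_contra! hkj
    exact hjk.ne_empty (inter_comm (S j) (S k) ▸ hS k j (by omega) (by omega))
  obtain ⟨w, ⟨hwa, hwb⟩, hwc⟩ := h
  have := hnear a b ha hb ⟨w, hwa, hwb⟩
  have := hnear b a hb ha ⟨w, hwb, hwa⟩
  have := hnear a c ha hc ⟨w, hwa, hwc⟩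
  have := hnear c a hc ha ⟨w, hwc, hwa⟩
  have := hnear b c hb hc ⟨w, hwb, hwc⟩
  have := hnear c b hc hb ⟨w, hwc, hwb⟩
  have hsucc : ∀ i j, i ≤ j → j ≤ i + 1 → S j ⊆ S i ∪ S (i + 1) := by
    intro i j hij hji
    obtain rfl | rfl : j = i ∨ j = i + 1 := by omega
    exacts [subset_union_left, subset_union_right]
  obtain ⟨i, hi, hai, hia, hbi, hib, hci, hic⟩ : ∃ i, i + 2 < N ∧ i ≤ a ∧ a ≤ i + 1 ∧
      i ≤ b ∧ b ≤ i + 1 ∧ i ≤ c ∧ c ≤ i + 1 := by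
    by_cases hm : min a (min b c) + 2 < N
    · exact ⟨min a (min b c), hm, by omega⟩
    · exact ⟨N - 3, by omega⟩
  exact ⟨i, hi, union_subset (union_subset (hsucc i a hai hia) (hsucc i b hbi hib))
    (hsucc i c hci hic)⟩

section Menger

variable {n : ℕ}

lemma menger_eq_zero_of_collinear {x y z : EuclideanSpace ℝ (Fin n)}
    (h : Collinear ℝ {x, y, z}) : menger x y z = 0 :=
  if_neg fun hne => hne.2.2.2 h

lemma menger_le_two_div_max_dist (x y z : EuclideanSpace ℝ (Fin n)) :
    menger x y z ≤ 2 / max (dist x z) (dist y z) := by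
  unfold menger
  split_ifs with h
  · obtain ⟨-, hyz, hxz, -⟩ := h
    have hx : 0 < dist x z := dist_pos.2 hxz
    have hy : 0 < dist y z := dist_pos.2 hyz
    have hL : infDist z (affineSpan ℝ {x, y} : Set (EuclideanSpace ℝ (Fin n))) ≤
        min (dist x z) (dist y z) := by
      rw [dist_comm x, dist_comm y]
      exact le_min (infDist_le_dist_of_mem (subset_affineSpan ℝ _ (by simp)))
        (infDist_le_dist_of_mem (subset_affineSpan ℝ _ (by simp)))
    calc 2 * infDist z (affineSpan ℝ {x, y} : Set (EuclideanSpace ℝ (Fin n))) /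
          (dist x z * dist y z)
        ≤ 2 * min (dist x z) (dist y z) / (dist x z * dist y z) := by gcongr
      _ = 2 / max (dist x z) (dist y z) := by
        rcases le_total (dist x z) (dist y z) with hle | hle
        · rw [min_eq_left hle, max_eq_right hle]; field_simp
        · rw [min_eq_right hle, max_eq_left hle]; field_simp
  · exact div_nonneg zero_le_two (le_max_of_le_left dist_nonneg)

lemma exists_menger_mul_max_dist_le_of_segment_inter_eq {v w₁ w₂ : EuclideanSpace ℝ (Fin n)}
    (hw₁ : w₁ ≠ v) (hw₂ : w₂ ≠ v) (h : segment ℝ v w₁ ∩ segment ℝ v w₂ = {v}) :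
    ∃ K, ∀ x ∈ segment ℝ v w₁ ∪ segment ℝ v w₂, ∀ y ∈ segment ℝ v w₁ ∪ segment ℝ v w₂,
      ∀ z ∈ segment ℝ v w₁ ∪ segment ℝ v w₂,
        menger x y z * max (dist x v) (max (dist y v) (dist z v)) ≤ K := by
  obtain ⟨c, hc, hcross⟩ := exists_mul_max_dist_le_dist_of_segment_inter_eq hw₁ hw₂ h
  refine ⟨4 * (1 + 1 / c), fun x hx y hy z hz => ?_⟩
  set T : Set (EuclideanSpace ℝ (Fin n)) := {x, y, z}
  set D := max (dist x z) (dist y z)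
  have hD : 0 ≤ D := le_max_of_le_left dist_nonneg
  by_cases hT₁ : T ⊆ segment ℝ v w₁
  · rw [menger_eq_zero_of_collinear (collinear_of_subset_segment hT₁), zero_mul]
    positivity
  by_cases hT₂ : T ⊆ segment ℝ v w₂
  · rw [menger_eq_zero_of_collinear (collinear_of_subset_segment hT₂), zero_mul]
    positivity
  have hT : T ⊆ segment ℝ v w₁ ∪ segment ℝ v w₂ := by
    simp only [T, insert_subset_iff, singleton_subset_iff]
    exact ⟨hx, hy, hz⟩
  obtain ⟨q, hqT, hq₁⟩ := not_subset.1 hT₁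
  obtain ⟨p, hpT, hp₂⟩ := not_subset.1 hT₂
  have hp₁ : p ∈ segment ℝ v w₁ := (hT hpT).resolve_right hp₂
  have hq₂ : q ∈ segment ℝ v w₂ := (hT hqT).resolve_left hq₁
  -- two of the points lie on different sides, which pins all three near `v` at scale `D`
  have hpv : dist p v ≤ 2 * D / c := by
    rw [le_div_iff₀ hc, mul_comm]
    exact (mul_le_mul_of_nonneg_left (le_max_left _ _) hc.le).trans
      ((hcross p hp₁ q hq₂).trans (dist_le_two_mul_max_dist hpT hqT))
  have hTv : ∀ r ∈ T, dist r v ≤ 2 * D * (1 + 1 / c) := fun r hr => by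
    have hrp : dist r p ≤ 2 * D := dist_le_two_mul_max_dist hr hpT
    have hexp : 2 * D * (1 + 1 / c) = 2 * D + 2 * D / c := by ring
    linarith [dist_triangle r p v]
  calc menger x y z * max (dist x v) (max (dist y v) (dist z v))
      ≤ 2 / D * (2 * D * (1 + 1 / c)) := by
        gcongr
        · exact menger_le_two_div_max_dist x y z
        · exact max_le (hTv x (by simp [T])) (max_le (hTv y (by simp [T])) (hTv z (by simp [T])))
    _ ≤ 4 * (1 + 1 / c) := by
        rcases hD.eq_or_lt with hD0 | hD0
        · rw [← hD0]; simp only [div_zero, zero_mul]; positivity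
        · rw [div_mul_eq_mul_div, div_le_iff₀ hD0]; linarith

lemma exists_menger_le_of_inter_eq_empty {A B C : Set (EuclideanSpace ℝ (Fin n))}
    (hA : IsCompact A) (hB : IsCompact B) (hC : IsCompact C) (h : A ∩ B ∩ C = ∅) :
    ∃ K, ∀ x ∈ A, ∀ y ∈ B, ∀ z ∈ C, menger x y z ≤ K := by
  have hpos : ∀ t ∈ A ×ˢ B ×ˢ C, 0 < max (dist t.1 t.2.2) (dist t.2.1 t.2.2) := by
    rintro ⟨x, y, z⟩ ⟨hx, hy, hz⟩
    by_contra! hle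
    have hxz : x = z := dist_le_zero.1 ((le_max_left _ _).trans hle)
    have hyz : y = z := dist_le_zero.1 ((le_max_right _ _).trans hle)
    subst hxz hyz
    exact h.subset ⟨⟨hx, hy⟩, hz⟩
  obtain ⟨δ, hδ, hmin⟩ := (hA.prod (hB.prod hC)).exists_forall_le'
    (by fun_prop : Continuous fun t : EuclideanSpace ℝ (Fin n) × EuclideanSpace ℝ (Fin n) ×
      EuclideanSpace ℝ (Fin n) => max (dist t.1 t.2.2) (dist t.2.1 t.2.2)).continuousOn hpos
  exact ⟨2 / δ, fun x hx y hy z hz => (menger_le_two_div_max_dist x y z).trans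
    (div_le_div_of_nonneg_left zero_le_two hδ (hmin (x, y, z) ⟨hx, hy, hz⟩))⟩

lemma exists_forall_menger_le_of_inter_eq_empty {S : ℕ → Set (EuclideanSpace ℝ (Fin n))}
    (hS : ∀ i, IsCompact (S i)) (m : ℕ) :
    ∃ B, ∀ a < m, ∀ b < m, ∀ c < m, S a ∩ S b ∩ S c = ∅ →
      ∀ x ∈ S a, ∀ y ∈ S b, ∀ z ∈ S c, menger x y z ≤ B := by
  have hbound : ∀ t ∈ Finset.range m ×ˢ Finset.range m ×ˢ Finset.range m, ∀ᶠ B in atTop,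
      S t.1 ∩ S t.2.1 ∩ S t.2.2 = ∅ →
        ∀ x ∈ S t.1, ∀ y ∈ S t.2.1, ∀ z ∈ S t.2.2, menger x y z ≤ B := by
    intro t _
    by_cases ht : S t.1 ∩ S t.2.1 ∩ S t.2.2 = ∅
    · obtain ⟨B, hB⟩ := exists_menger_le_of_inter_eq_empty (hS _) (hS _) (hS _) ht
      filter_upwards [eventually_ge_atTop B] with B' hB' _ x hx y hy z hz
      exact (hB x hx y hy z hz).trans hB'
    · exact Eventually.of_forall fun _ h => absurd h ht
  obtain ⟨B, hB⟩ := ((Filter.eventually_all_finset _).2 hbound).exists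
  exact ⟨B, fun a ha b hb c hc => hB (a, b, c) (by simp [ha, hb, hc])⟩

lemma exists_menger_mul_max_dist_le_at_vertices {N : ℕ} {v : ℕ → EuclideanSpace ℝ (Fin n)}
    (hv : ∀ i, i + 1 < N → v i ≠ v (i + 1))
    (hadj : ∀ i, i + 2 < N →
      segment ℝ (v i) (v (i + 1)) ∩ segment ℝ (v (i + 1)) (v (i + 2)) = {v (i + 1)}) :
    ∃ K > 0, ∀ i ∈ Finset.range (N - 2),
      ∀ x ∈ segment ℝ (v i) (v (i + 1)) ∪ segment ℝ (v (i + 1)) (v (i + 2)),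
      ∀ y ∈ segment ℝ (v i) (v (i + 1)) ∪ segment ℝ (v (i + 1)) (v (i + 2)),
      ∀ z ∈ segment ℝ (v i) (v (i + 1)) ∪ segment ℝ (v (i + 1)) (v (i + 2)),
        menger x y z * max (dist x (v (i + 1))) (max (dist y (v (i + 1))) (dist z (v (i + 1))))
          ≤ K := by
  have hcorner : ∀ i ∈ Finset.range (N - 2), ∀ᶠ K in atTop,
      ∀ x ∈ segment ℝ (v i) (v (i + 1)) ∪ segment ℝ (v (i + 1)) (v (i + 2)),
      ∀ y ∈ segment ℝ (v i) (v (i + 1)) ∪ segment ℝ (v (i + 1)) (v (i + 2)),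
      ∀ z ∈ segment ℝ (v i) (v (i + 1)) ∪ segment ℝ (v (i + 1)) (v (i + 2)),
        menger x y z * max (dist x (v (i + 1))) (max (dist y (v (i + 1))) (dist z (v (i + 1))))
          ≤ K := by
    intro i hi
    rw [Finset.mem_range] at hi
    obtain ⟨K, hK⟩ := exists_menger_mul_max_dist_le_of_segment_inter_eq (hv i (by omega))
      (hv (i + 1) (by omega)).symm (by rw [segment_symm]; exact hadj i (by omega))
    rw [segment_symm ℝ (v (i + 1)) (v i)] at hK
    filter_upwards [eventually_ge_atTop K] with K' hK' x hx y hy z hz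
    exact (hK x hx y hy z hz).trans hK'
  exact ((eventually_gt_atTop 0).and ((Filter.eventually_all_finset _).2 hcorner)).exists

lemma exists_menger_rpow_le_of_polygonalPath {N : ℕ} {v : ℕ → EuclideanSpace ℝ (Fin n)}
    (hN : 3 ≤ N) (hv : ∀ i, i + 1 < N → v i ≠ v (i + 1))
    (hadj : ∀ i, i + 2 < N →
      segment ℝ (v i) (v (i + 1)) ∩ segment ℝ (v (i + 1)) (v (i + 2)) = {v (i + 1)})
    (hdisj : ∀ i j, i + 2 ≤ j → j + 1 < N →
      segment ℝ (v i) (v (i + 1)) ∩ segment ℝ (v j) (v (j + 1)) = ∅)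
    {p : ℝ} (hp : 0 < p) :
    ∃ C K : ℝ≥0∞, C ≠ ⊤ ∧ K ≠ ⊤ ∧
      ∀ x ∈ polygonalPath v (N - 1), ∀ y ∈ polygonalPath v (N - 1),
        ∀ z ∈ polygonalPath v (N - 1), ENNReal.ofReal (menger x y z) ^ p ≤
          C + ∑ i ∈ Finset.range (N - 2), K * (edist x (v (i + 1)) ^ (-(p / 3)) *
            edist y (v (i + 1)) ^ (-(p / 3)) * edist z (v (i + 1)) ^ (-(p / 3))) := by
  set S : ℕ → Set (EuclideanSpace ℝ (Fin n)) := fun i => segment ℝ (v i) (v (i + 1))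
  obtain ⟨B, hB⟩ :=
    exists_forall_menger_le_of_inter_eq_empty (S := S) (fun _ => isCompact_segment _ _) (N - 1)
  obtain ⟨K, hK, hKbound⟩ := exists_menger_mul_max_dist_le_at_vertices hv hadj
  refine ⟨ENNReal.ofReal B ^ p, ENNReal.ofReal K ^ p, by finiteness, by finiteness, ?_⟩
  intro x hx y hy z hz
  obtain ⟨a, ha, hxa⟩ := mem_iUnion₂.1 hx
  obtain ⟨b, hb, hyb⟩ := mem_iUnion₂.1 hy
  obtain ⟨c, hc, hzc⟩ := mem_iUnion₂.1 hz
  rw [Finset.mem_range] at ha hb hc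
  by_cases hempty : S a ∩ S b ∩ S c = ∅
  · exact le_add_right (ENNReal.rpow_le_rpow
      (ENNReal.ofReal_le_ofReal (hB a ha b hb c hc hempty x hxa y hyb z hzc)) hp.le)
  · obtain ⟨i, hi, hsub⟩ := exists_subset_union_succ_of_inter_nonempty (S := S) hN hdisj ha hb hc
      (nonempty_iff_ne_empty.2 hempty)
    have hiN : i ∈ Finset.range (N - 2) := Finset.mem_range.2 (by omega)
    have hκ := ENNReal.ofReal_rpow_le_of_mul_max_le hK hp
      (hKbound i hiN x (hsub (Or.inl (Or.inl hxa))) y (hsub (Or.inl (Or.inr hyb)))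
        z (hsub (Or.inr hzc)))
    simp only [← edist_dist] at hκ
    refine le_add_left (hκ.trans ?_)
    exact Finset.single_le_sum (f := fun j => ENNReal.ofReal K ^ p *
      (edist x (v (j + 1)) ^ (-(p / 3)) * edist y (v (j + 1)) ^ (-(p / 3)) *
        edist z (v (j + 1)) ^ (-(p / 3)))) (fun _ _ => zero_le) hiN

end Menger

/-- Every simple polygon has finite integral Menger curvature for `p ∈ (0,3)`. -/
theorem Mp_lt_top_of_isSimplePolygon {n : ℕ} (P : Set (EuclideanSpace ℝ (Fin n)))
    (hP : IsSimplePolygon P) (p : ℝ) (hp : p ∈ Set.Ioo (0:ℝ) 3) :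
    Mp p P < ⊤ := by
  obtain ⟨N, v, hN, hv, rfl, hadj, hdisj⟩ := hP
  obtain ⟨C, K, hC, hK, hbound⟩ := exists_menger_rpow_le_of_polygonalPath hN hv hadj hdisj hp.1
  have hPm : MeasurableSet (polygonalPath v (N - 1)) :=
    (isCompact_polygonalPath v _).isClosed.measurableSet
  have : IsFiniteMeasure (μH[1].restrict (polygonalPath v (N - 1))) :=
    ⟨by simpa using hausdorffMeasure_polygonalPath_lt_top v (N - 1)⟩
  calc Mp p (polygonalPath v (N - 1))
      ≤ ∫⁻ z in polygonalPath v (N - 1), ∫⁻ y in polygonalPath v (N - 1),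
          ∫⁻ x in polygonalPath v (N - 1), C + ∑ i ∈ Finset.range (N - 2),
            K * (edist x (v (i + 1)) ^ (-(p / 3)) * edist y (v (i + 1)) ^ (-(p / 3)) *
              edist z (v (i + 1)) ^ (-(p / 3))) ∂μH[1] ∂μH[1] ∂μH[1] :=
        setLIntegral_mono' hPm fun z hz => setLIntegral_mono' hPm fun y hy =>
          setLIntegral_mono' hPm fun x hx => hbound x hx y hy z hz
    _ < ⊤ := lintegral_lintegral_lintegral_const_add_sum_lt_top hC (fun _ => hK)
        (fun _ => (measurable_id.edist measurable_const).pow_const _)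
        (fun _ => (setLIntegral_polygonalPath_edist_rpow_neg_lt_top (by linarith [hp.1])
          (by linarith [hp.2]) v _ _).ne)
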